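/- arXiv:1411.3670 — 2 statements merged into one kernel-verified Lean document; each statement's English description precedes it below -/
import Mathlib

section
/- Let X ⊂ K be compact subsets of ℝⁿ and let t be a distribution on ℝⁿ \ X supported in K \ X. If there exist constants C ≥ 0, m ∈ ℕ such that |t(φ)| ≤ C ‖φ‖_m^K for all smooth φ whose support does not meet X (where ‖φ‖_m^K = sup over x ∈ K, |α| ≤ m of |∂^α φ(x)|), then t extends to a compactly supported distribution on ℝⁿ of order m supported in K. -/
open MeasureTheory Set Filter Topology

/-- The seminorm `‖φ‖_m^K = sup_{x ∈ K, |α| ≤ m} |∂^α φ(x)|`. -/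
noncomputable def semiNorm {n : ℕ} (m : ℕ) (K : Set (EuclideanSpace ℝ (Fin n)))
    (φ : EuclideanSpace ℝ (Fin n) → ℝ) : ℝ :=
  ⨆ p : Fin (m + 1) × K, ‖iteratedFDeriv ℝ (p.1 : ℕ) φ (p.2 : EuclideanSpace ℝ (Fin n))‖

lemma semiNorm_nonneg {n : ℕ} (m : ℕ) (K : Set (EuclideanSpace ℝ (Fin n)))
    (φ : EuclideanSpace ℝ (Fin n) → ℝ) : 0 ≤ semiNorm m K φ :=
  Real.iSup_nonneg fun _ => norm_nonneg _

lemma semiNorm_bddAbove {n : ℕ} (m : ℕ) {K : Set (EuclideanSpace ℝ (Fin n))}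
    (hK : IsCompact K) {φ : EuclideanSpace ℝ (Fin n) → ℝ} (hφ : ContDiff ℝ (⊤ : ℕ∞) φ) :
    BddAbove (Set.range fun p : Fin (m + 1) × K =>
      ‖iteratedFDeriv ℝ (p.1 : ℕ) φ (p.2 : EuclideanSpace ℝ (Fin n))‖) := by
  have h : ∀ i : Fin (m + 1), ∃ Mi : ℝ, ∀ x ∈ K, ‖iteratedFDeriv ℝ (i : ℕ) φ x‖ ≤ Mi := by
    intro i
    have hc : Continuous fun x => ‖iteratedFDeriv ℝ (i : ℕ) φ x‖ :=
      (hφ.continuous_iteratedFDeriv (by exact_mod_cast le_top)).norm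
    obtain ⟨M, hM⟩ := (hK.image hc).bddAbove
    exact ⟨M, fun x hx => hM ⟨x, hx, rfl⟩⟩
  choose B hB using h
  refine ⟨Finset.univ.sup' ⟨0, Finset.mem_univ 0⟩ B, ?_⟩
  rintro r ⟨⟨i, x⟩, rfl⟩
  exact (hB i x x.2).trans (Finset.le_sup' B (Finset.mem_univ i))

lemma le_semiNorm {n : ℕ} (m : ℕ) {K : Set (EuclideanSpace ℝ (Fin n))}
    (hK : IsCompact K) {φ : EuclideanSpace ℝ (Fin n) → ℝ} (hφ : ContDiff ℝ (⊤ : ℕ∞) φ)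
    (p : Fin (m + 1) × K) :
    ‖iteratedFDeriv ℝ (p.1 : ℕ) φ (p.2 : EuclideanSpace ℝ (Fin n))‖ ≤ semiNorm m K φ :=
  le_ciSup (semiNorm_bddAbove m hK hφ) p

lemma semiNorm_add_le {n : ℕ} (m : ℕ) {K : Set (EuclideanSpace ℝ (Fin n))}
    (hK : IsCompact K) {φ ψ : EuclideanSpace ℝ (Fin n) → ℝ}
    (hφ : ContDiff ℝ (⊤ : ℕ∞) φ) (hψ : ContDiff ℝ (⊤ : ℕ∞) ψ) :
    semiNorm m K (φ + ψ) ≤ semiNorm m K φ + semiNorm m K ψ := by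
  refine Real.iSup_le (fun p => ?_)
    (add_nonneg (semiNorm_nonneg m K φ) (semiNorm_nonneg m K ψ))
  rw [iteratedFDeriv_add_apply (hφ.contDiffAt.of_le (by exact_mod_cast le_top)) (hψ.contDiffAt.of_le (by exact_mod_cast le_top))]
  exact (norm_add_le _ _).trans
    (add_le_add (le_semiNorm m hK hφ p) (le_semiNorm m hK hψ p))

lemma semiNorm_smul {n : ℕ} (m : ℕ) (K : Set (EuclideanSpace ℝ (Fin n)))
    {φ : EuclideanSpace ℝ (Fin n) → ℝ} (hφ : ContDiff ℝ (⊤ : ℕ∞) φ) {c : ℝ} (hc : 0 < c) :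
    semiNorm m K (c • φ) = c * semiNorm m K φ := by
  unfold semiNorm
  rw [Real.mul_iSup_of_nonneg hc.le]
  congr 1; funext p
  rw [iteratedFDeriv_const_smul_apply (hφ.contDiffAt.of_le (by exact_mod_cast le_top)), norm_smul, Real.norm_eq_abs,
    abs_of_pos hc]

lemma semiNorm_neg {n : ℕ} (m : ℕ) (K : Set (EuclideanSpace ℝ (Fin n)))
    (φ : EuclideanSpace ℝ (Fin n) → ℝ) : semiNorm m K (-φ) = semiNorm m K φ := by
  unfold semiNorm
  congr 1; funext p
  rw [iteratedFDeriv_neg_apply, norm_neg]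

/-- Let `X ⊆ K` be compact subsets of `ℝⁿ` and `t` a distribution on `ℝⁿ \ X` supported in
`K \ X`.  If `|t(φ)| ≤ C ‖φ‖_m^K` for all smooth `φ` whose support does not meet `X`, then
`t` extends to a compactly supported distribution on `ℝⁿ` of order `m` supported in `K`. -/
theorem extendible_of_bounded (n : ℕ) (X K : Set (EuclideanSpace ℝ (Fin n)))
    (hX : IsCompact X) (hK : IsCompact K) (hXK : X ⊆ K)
    (t : (EuclideanSpace ℝ (Fin n) → ℝ) →ₗ[ℝ] ℝ)
    (ht0 : ∀ φ, ContDiff ℝ (⊤ : ℕ∞) φ → tsupport φ ∩ X = ∅ → tsupport φ ∩ K = ∅ → t φ = 0)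
    (C : ℝ) (m : ℕ)
    (hbound : ∀ φ, ContDiff ℝ (⊤ : ℕ∞) φ → tsupport φ ∩ X = ∅ → |t φ| ≤ C * semiNorm m K φ) :
    ∃ (tbar : (EuclideanSpace ℝ (Fin n) → ℝ) →ₗ[ℝ] ℝ) (C' : ℝ),
      (∀ φ, ContDiff ℝ (⊤ : ℕ∞) φ → |tbar φ| ≤ C' * semiNorm m K φ) ∧
      (∀ φ, ContDiff ℝ (⊤ : ℕ∞) φ → tsupport φ ∩ X = ∅ → tbar φ = t φ) := by
  classical
  set E := EuclideanSpace ℝ (Fin n) → ℝ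
  -- the submodule of smooth functions
  let Es : Submodule ℝ E :=
    { carrier := {φ | ContDiff ℝ (⊤ : ℕ∞) φ}
      add_mem' := by
        intro a b ha hb
        simp only [Set.mem_setOf_eq] at *
        exact ha.add hb
      zero_mem' := by
        simp only [Set.mem_setOf_eq]
        exact contDiff_const
      smul_mem' := by
        intro c a h
        simp only [Set.mem_setOf_eq] at *
        exact h.const_smul c }
  -- the submodule of smooth functions with support avoiding X
  let S : Submodule ℝ Es :=
    { carrier := {φ | tsupport (φ : E) ∩ X = ∅}
      add_mem' := by
        intro a b ha hb
        have hsub : tsupport ((a : E) + (b : E)) ⊆ tsupport (a : E) ∪ tsupport (b : E) :=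
          (closure_mono (Function.support_add _ _)).trans closure_union.subset
        have : (tsupport (a : E) ∪ tsupport (b : E)) ∩ X = ∅ := by
          rw [Set.union_inter_distrib_right, ha, hb, Set.union_empty]
        exact Set.eq_empty_of_subset_empty
          ((Set.inter_subset_inter_left X hsub).trans this.subset)
      zero_mem' := by
        have h0 : ((0 : Es) : E) = (0 : E) := rfl
        have : tsupport ((0 : Es) : E) = ∅ := by
          rw [h0, tsupport]
          have : Function.support (0 : E) = ∅ := Function.support_zero
          rw [this, closure_empty]
        show tsupport ((0 : Es) : E) ∩ X = ∅
        rw [this, Set.empty_inter]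
      smul_mem' := by
        intro c a ha
        have hsub : tsupport (c • (a : E)) ⊆ tsupport (a : E) := by
          refine closure_mono ?_
          intro x hx
          simp only [Function.mem_support] at hx ⊢
          intro h0
          have : (c • (a : E)) x = c • (a : E) x := rfl
          exact hx (by rw [this, h0, smul_zero])
        exact Set.eq_empty_of_subset_empty
          ((Set.inter_subset_inter_left X hsub).trans ha.subset) }
  -- t restricted to S
  let tS : S →ₗ[ℝ] ℝ := t ∘ₗ (Es.subtype ∘ₗ S.subtype)
  let f : Es →ₗ.[ℝ] ℝ := ⟨S, tS⟩
  let N : Es → ℝ := fun φ => max C 0 * semiNorm m K (φ : E)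
  have hNhom : ∀ c : ℝ, 0 < c → ∀ x : Es, N (c • x) = c * N x := by
    intro c hc x
    show max C 0 * semiNorm m K (c • (x : E)) = c * (max C 0 * semiNorm m K (x : E))
    rw [semiNorm_smul m K x.2 hc]; ring
  have hNadd : ∀ x y : Es, N (x + y) ≤ N x + N y := by
    intro x y
    show max C 0 * semiNorm m K ((x : E) + (y : E)) ≤ _
    have := semiNorm_add_le m hK x.2 y.2
    calc max C 0 * semiNorm m K ((x : E) + (y : E))
        ≤ max C 0 * (semiNorm m K (x : E) + semiNorm m K (y : E)) :=
          mul_le_mul_of_nonneg_left this (le_max_right C 0)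
      _ = N x + N y := by ring
  have hf : ∀ x : f.domain, f x ≤ N x := by
    intro x
    have hx : tsupport ((x : Es) : E) ∩ X = ∅ := x.2
    have hb := hbound ((x : Es) : E) (x : Es).2 hx
    have : f x = t ((x : Es) : E) := rfl
    rw [this]
    refine (le_abs_self _).trans (hb.trans ?_)
    exact mul_le_mul_of_nonneg_right (le_max_left C 0) (semiNorm_nonneg m K _)
  obtain ⟨g, hg1, hg2⟩ := exists_extension_of_le_sublinear f N hNhom hNadd hf
  obtain ⟨tbar, htbar⟩ := LinearMap.exists_extend g
  have htbar' : ∀ ψ : Es, tbar (ψ : E) = g ψ := fun ψ => LinearMap.congr_fun htbar ψ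
  refine ⟨tbar, max C 0, ?_, ?_⟩
  · intro φ hφ
    have h1 : g ⟨φ, hφ⟩ ≤ N ⟨φ, hφ⟩ := hg2 _
    have h2 : -g ⟨φ, hφ⟩ ≤ N ⟨φ, hφ⟩ := by
      have := hg2 (-⟨φ, hφ⟩)
      rw [map_neg] at this
      have hneg : N (-⟨φ, hφ⟩ : Es) = N ⟨φ, hφ⟩ := by
        show max C 0 * semiNorm m K (-φ) = max C 0 * semiNorm m K φ
        rw [semiNorm_neg]
      rwa [hneg] at this
    have : tbar φ = g ⟨φ, hφ⟩ := htbar' ⟨φ, hφ⟩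
    rw [this]
    exact abs_le.2 ⟨neg_le.mp h2, h1⟩
  · intro φ hφ hφX
    have hmem : (⟨φ, hφ⟩ : Es) ∈ S := hφX
    have : tbar φ = g ⟨φ, hφ⟩ := htbar' ⟨φ, hφ⟩
    rw [this]
    exact hg1 ⟨⟨φ, hφ⟩, hmem⟩
end

section
/- Lojasiewicz inequality consequence: let g ∈ C^∞(ℝⁿ), X = g^{-1}(0), and suppose g satisfies: for every compact K there exist C > 0, s ≥ 0 with |g(x)| ≥ C d(x,X)^s for all x ∈ K. Then f = 1/g ∈ C^∞(ℝⁿ \ X) is tempered along X: for every m ∈ ℕ and compact K there exist C', s' ≥ 0 with sup_{|α|≤m} |∂^α f(x)| ≤ C'(1 + d(x,X)^{-s'}) for all x ∈ K \ X. -/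
open Set Metric
open scoped Nat

private lemma norm_iteratedFDeriv_inv_real (i : ℕ) (y : ℝ) :
    ‖iteratedFDeriv ℝ i (Inv.inv : ℝ → ℝ) y‖ = i ! * |y|⁻¹ ^ (i + 1) := by
  rw [norm_iteratedFDeriv_eq_norm_iteratedDeriv, iteratedDeriv_eq_iterate, iter_deriv_inv,
    Real.norm_eq_abs, abs_mul]
  congr 1
  · rw [abs_mul, abs_pow, abs_neg, abs_one, one_pow, one_mul, Nat.abs_cast]
  · have h2 : (-1 - (i : ℤ)) = -((i + 1 : ℕ) : ℤ) := by push_cast; ring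
    rw [h2, zpow_neg, abs_inv, inv_pow, zpow_natCast, abs_pow]

private lemma bound_iteratedFDeriv_on_compact {n : ℕ}
    (f : EuclideanSpace ℝ (Fin n) → ℝ) (hf : ContDiff ℝ (⊤ : ℕ∞) f)
    {K : Set (EuclideanSpace ℝ (Fin n))} (hK : IsCompact K) (m : ℕ) :
    ∃ D : ℝ, 1 ≤ D ∧ ∀ i ≤ m, ∀ x ∈ K, ‖iteratedFDeriv ℝ i f x‖ ≤ D := by
  induction m with
  | zero =>
    obtain ⟨C0, hC0⟩ := hK.exists_bound_of_continuousOn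
      ((hf.continuous_iteratedFDeriv (m := 0) (by simp)).continuousOn)
    refine ⟨max 1 C0, le_max_left _ _, ?_⟩
    intro i hi x hx
    interval_cases i
    exact (hC0 x hx).trans (le_max_right _ _)
  | succ m ih =>
    obtain ⟨D, hD1, hD⟩ := ih
    obtain ⟨C0, hC0⟩ := hK.exists_bound_of_continuousOn
      ((hf.continuous_iteratedFDeriv (m := m + 1) (by exact_mod_cast le_top)).continuousOn)
    refine ⟨max D C0, le_trans hD1 (le_max_left _ _), ?_⟩
    intro i hi x hx
    rcases Nat.lt_succ_iff_lt_or_eq.mp (Nat.lt_succ_of_le hi) with h | h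
    · exact (hD i (Nat.lt_succ_iff.mp h) x hx).trans (le_max_left _ _)
    · subst h; exact (hC0 x hx).trans (le_max_right _ _)

/-- Lojasiewicz inequality consequence: if `g ∈ C^∞(ℝⁿ)`, `X = g⁻¹(0)`, and on every
compact `K` one has `|g(x)| ≥ C d(x,X)^s`, then `f = 1/g` is smooth on `ℝⁿ \ X` and
tempered along `X`: for every `m` and compact `K` there are `C', s' ≥ 0` with
`sup_{|α| ≤ m} |∂^α f(x)| ≤ C' (1 + d(x,X)^{-s'})` for `x ∈ K \ X`. -/
theorem inverse_tempered_of_lojasiewicz (n : ℕ)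
    (g : EuclideanSpace ℝ (Fin n) → ℝ) (hg : ContDiff ℝ (⊤ : ℕ∞) g)
    (X : Set (EuclideanSpace ℝ (Fin n))) (hXdef : X = {x | g x = 0})
    (hloj : ∀ K : Set (EuclideanSpace ℝ (Fin n)), IsCompact K →
      ∃ C s : ℝ, 0 < C ∧ 0 ≤ s ∧ ∀ x ∈ K, C * Metric.infDist x X ^ s ≤ |g x|) :
    ContDiffOn ℝ (⊤ : ℕ∞) (fun x => (g x)⁻¹) Xᶜ ∧
    ∀ (m : ℕ) (K : Set (EuclideanSpace ℝ (Fin n))), IsCompact K →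
      ∃ C' s' : ℝ, 0 ≤ C' ∧ 0 ≤ s' ∧ ∀ x ∈ K \ X, ∀ i ≤ m,
        ‖iteratedFDeriv ℝ i (fun x => (g x)⁻¹) x‖ ≤
          C' * (1 + Metric.infDist x X ^ (-s')) := by
  have hXclosed : IsClosed X := by
    rw [hXdef]
    exact isClosed_eq hg.continuous continuous_const
  have hXc_open : IsOpen Xᶜ := hXclosed.isOpen_compl
  have hne : ∀ x ∈ Xᶜ, g x ≠ 0 := by
    intro x hx
    rw [hXdef] at hx
    exact hx
  have hsmooth : ContDiffOn ℝ (⊤ : ℕ∞) (fun x => (g x)⁻¹) Xᶜ := hg.contDiffOn.inv hne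
  refine ⟨hsmooth, ?_⟩
  intro m K hK
  rcases X.eq_empty_or_nonempty with hXe | hXne
  · -- X is empty: g never vanishes, so g⁻¹ is smooth everywhere; use s' = 0
    have hginv : ContDiff ℝ (⊤ : ℕ∞) (fun x => (g x)⁻¹) := by
      have h := hsmooth
      rw [hXe, compl_empty] at h
      exact contDiffOn_univ.mp h
    obtain ⟨D, hD1, hD⟩ := bound_iteratedFDeriv_on_compact _ hginv hK m
    refine ⟨D, 0, by linarith, le_rfl, ?_⟩
    intro x hx i hi
    have h1 : (1 : ℝ) ≤ 1 + Metric.infDist x X ^ (-(0:ℝ)) := by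
      rw [neg_zero, Real.rpow_zero]; norm_num
    calc ‖iteratedFDeriv ℝ i (fun x => (g x)⁻¹) x‖ ≤ D := hD i hi x hx.1
      _ = D * 1 := (mul_one _).symm
      _ ≤ D * (1 + Metric.infDist x X ^ (-(0:ℝ))) :=
          mul_le_mul_of_nonneg_left h1 (by linarith)
  · -- main case
    obtain ⟨C, s, hC, hs, hlo⟩ := hloj K hK
    obtain ⟨D, hD1, hD⟩ := bound_iteratedFDeriv_on_compact _ hg hK m
    set s' : ℝ := s * (m + 1) with hs'def
    have hs' : 0 ≤ s' := mul_nonneg hs (by positivity)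
    set A : ℝ := (m ! : ℝ) * (1 + C⁻¹) ^ (m + 1) * 2 ^ (m + 1) with hAdef
    refine ⟨(m ! : ℝ) * D ^ m * A, s', by positivity, hs', ?_⟩
    intro x hx i hi
    have hxK : x ∈ K := hx.1
    have hxX : x ∉ X := hx.2
    have hxXc : x ∈ Xᶜ := hxX
    have hd : 0 < Metric.infDist x X :=
      (hXclosed.notMem_iff_infDist_pos hXne).mp hxX
    set d : ℝ := Metric.infDist x X with hddef
    have hgx : g x ≠ 0 := hne x hxX
    have ha : 0 < |g x| := abs_pos.mpr hgx
    have hds : 0 ≤ d ^ (-s) := Real.rpow_nonneg hd.le _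
    have hds' : 0 ≤ d ^ (-s') := Real.rpow_nonneg hd.le _
    -- |g x|⁻¹ ≤ C⁻¹ * d ^ (-s)
    have hinv : |g x|⁻¹ ≤ C⁻¹ * d ^ (-s) := by
      have h1 : 0 < C * d ^ s := by positivity
      have h2 : C * d ^ s ≤ |g x| := hlo x hxK
      have h3 := one_div_le_one_div_of_le h1 h2
      rw [one_div, one_div] at h3
      calc |g x|⁻¹ ≤ (C * d ^ s)⁻¹ := h3
        _ = C⁻¹ * (d ^ s)⁻¹ := by rw [mul_inv]
        _ = C⁻¹ * d ^ (-s) := by rw [Real.rpow_neg hd.le]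
    have hkey : (1 + d ^ (-s)) ^ (m + 1) ≤ 2 ^ (m + 1) * (1 + d ^ (-s')) := by
      rcases le_or_gt d 1 with hd1 | hd1
      · have h1le : (1:ℝ) ≤ d ^ (-s) :=
          Real.one_le_rpow_of_pos_of_le_one_of_nonpos hd hd1 (by linarith)
        have heq : (d ^ (-s)) ^ (m + 1) = d ^ (-s') := by
          rw [← Real.rpow_natCast (d ^ (-s)) (m + 1), ← Real.rpow_mul hd.le]
          congr 1
          push_cast [hs'def]
          ring
        calc (1 + d ^ (-s)) ^ (m + 1) ≤ (2 * d ^ (-s)) ^ (m + 1) :=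
              pow_le_pow_left₀ (by linarith) (by linarith) _
          _ = 2 ^ (m + 1) * (d ^ (-s)) ^ (m + 1) := mul_pow _ _ _
          _ = 2 ^ (m + 1) * d ^ (-s') := by rw [heq]
          _ ≤ 2 ^ (m + 1) * (1 + d ^ (-s')) :=
              mul_le_mul_of_nonneg_left (by linarith) (by positivity)
      · have hle1 : d ^ (-s) ≤ 1 :=
          Real.rpow_le_one_of_one_le_of_nonpos hd1.le (by linarith)
        calc (1 + d ^ (-s)) ^ (m + 1) ≤ 2 ^ (m + 1) :=
              pow_le_pow_left₀ (by linarith) (by linarith) _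
          _ ≤ 2 ^ (m + 1) * (1 + d ^ (-s')) :=
              le_mul_of_one_le_right (by positivity) (by linarith)
    -- the base for the pointwise bound on derivatives of the inverse
    set b : ℝ := (1 + C⁻¹) * (1 + d ^ (-s)) with hbdef
    have hC0 : (0:ℝ) ≤ C⁻¹ := by positivity
    have hbase : (1:ℝ) ≤ b := by rw [hbdef]; nlinarith
    have hCx : ∀ j ≤ i, ‖iteratedFDerivWithin ℝ j (Inv.inv : ℝ → ℝ) ({0}ᶜ : Set ℝ) (g x)‖
        ≤ (m ! : ℝ) * b ^ (m + 1) := by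
      intro j hj
      have hgmem : g x ∈ ({0}ᶜ : Set ℝ) := hgx
      rw [iteratedFDerivWithin_of_isOpen j isOpen_compl_singleton hgmem,
        norm_iteratedFDeriv_inv_real]
      have h1 : |g x|⁻¹ ≤ b := by
        calc |g x|⁻¹ ≤ C⁻¹ * d ^ (-s) := hinv
          _ ≤ b := by rw [hbdef]; nlinarith
      have hpow : |g x|⁻¹ ^ (j + 1) ≤ b ^ (m + 1) := by
        calc |g x|⁻¹ ^ (j + 1) ≤ b ^ (j + 1) := pow_le_pow_left₀ (by positivity) h1 _
          _ ≤ b ^ (m + 1) := pow_le_pow_right₀ hbase (by omega)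
      have hfact : (j ! : ℝ) ≤ (m ! : ℝ) :=
        Nat.cast_le.mpr (Nat.factorial_le (hj.trans hi))
      exact mul_le_mul hfact hpow (by positivity) (by positivity)
    have hDj : ∀ j, 1 ≤ j → j ≤ i → ‖iteratedFDerivWithin ℝ j g Xᶜ x‖ ≤ D ^ j := by
      intro j hj1 hji
      rw [iteratedFDerivWithin_of_isOpen j hXc_open hxXc]
      exact (hD j (hji.trans hi) x hxK).trans (le_self_pow₀ hD1 (by omega))
    have hmaps : MapsTo g Xᶜ ({0}ᶜ : Set ℝ) := fun y hy => hne y hy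
    have hcomp := norm_iteratedFDerivWithin_comp_le (𝕜 := ℝ) (n := i)
      (contDiffOn_inv ℝ) hg.contDiffOn (by exact_mod_cast le_top) isOpen_compl_singleton.uniqueDiffOn
      hXc_open.uniqueDiffOn hmaps hxXc hCx hDj
    have heq : iteratedFDerivWithin ℝ i ((Inv.inv : ℝ → ℝ) ∘ g) Xᶜ x
        = iteratedFDeriv ℝ i (fun x => (g x)⁻¹) x := by
      rw [iteratedFDerivWithin_of_isOpen i hXc_open hxXc]
      rfl
    rw [← heq]
    have hCb : (0:ℝ) ≤ (m ! : ℝ) * b ^ (m + 1) := by positivity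
    calc ‖iteratedFDerivWithin ℝ i ((Inv.inv : ℝ → ℝ) ∘ g) Xᶜ x‖
        ≤ (i ! : ℝ) * ((m ! : ℝ) * b ^ (m + 1)) * D ^ i := hcomp
      _ ≤ (m ! : ℝ) * ((m ! : ℝ) * b ^ (m + 1)) * D ^ m := by
          apply mul_le_mul
          · exact mul_le_mul_of_nonneg_right
              (Nat.cast_le.mpr (Nat.factorial_le hi)) hCb
          · exact pow_le_pow_right₀ hD1 hi
          · positivity
          · positivity
      _ = ((m ! : ℝ) * D ^ m) * ((m ! : ℝ) * ((1 + C⁻¹) ^ (m + 1) * (1 + d ^ (-s)) ^ (m + 1))) := by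
          rw [hbdef, mul_pow]; ring
      _ ≤ ((m ! : ℝ) * D ^ m) * ((m ! : ℝ) * ((1 + C⁻¹) ^ (m + 1) * (2 ^ (m + 1) * (1 + d ^ (-s'))))) := by
          apply mul_le_mul_of_nonneg_left _ (by positivity)
          apply mul_le_mul_of_nonneg_left _ (by positivity)
          exact mul_le_mul_of_nonneg_left hkey (by positivity)
      _ = ((m ! : ℝ) * D ^ m * A) * (1 + d ^ (-s')) := by
          rw [hAdef]; ring
end
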